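/- arXiv:2603.22659 — 5 statements merged into one kernel-verified Lean document; each statement's English description precedes it below -/
import Mathlib

section
/- Let 0 < σ̲ ≤ σ ≤ σ̄, let β > 0, a ∈ ℝ, and let Z be a real random variable with the Gaussian distribution N(0,σ²). Then E[exp(−β(a+Z)²/(2σ̄²))] ≤ (1+β)^{−ρ} · exp(−βa²/(2(1+β)σ̄²)), where ρ := σ̲²/(2σ̄²). (This is the classical-Gaussian specialization of the G-heat-equation estimate used in the proof of the main missed-detection theorem.) -/
open MeasureTheory ProbabilityTheory Real
open scoped NNReal

/-! Completing the square gives, for `X ~ N(m, v)` and `1 + 2cv > 0`,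
`E[exp(-cX²)] = (1 + 2cv)^(-1/2) exp(-cm² / (1 + 2cv))`. Apply this to `X = a + Z` with
`c = β / (2σ̄²)`, so that `2cv = tβ` with `t = σ²/σ̄² ∈ (0, 1]`. Bernoulli's inequality
`(1 + β)^t ≤ 1 + tβ` and `2ρ ≤ t` bound the prefactor by `(1 + β)^(-ρ)`, and `1 + tβ ≤ 1 + β`
bounds the exponential. -/

lemma integral_exp_neg_mul_sq_gaussianReal (m : ℝ) (v : ℝ≥0) {c : ℝ}
    (hc : 0 < 1 + 2 * c * v) :
    ∫ x, exp (-c * x ^ 2) ∂gaussianReal m v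
      = (1 + 2 * c * v) ^ (-(1 / 2 : ℝ)) * exp (-c * m ^ 2 / (1 + 2 * c * v)) := by
  rcases eq_or_ne v 0 with rfl | hv
  · simp [gaussianReal_zero_var]
  set s := 1 + 2 * c * (v : ℝ)
  have hv_pos : 0 < (v : ℝ) := by positivity
  have complete_square : ∀ x : ℝ, -(x - m) ^ 2 / (2 * v) + -c * x ^ 2
      = -c * m ^ 2 / s + -(s / (2 * v)) * (x - m / s) ^ 2 := by
    intro x
    field_simp
    simp only [s]
    ring
  have sqrt_ratio : (√(2 * π * v))⁻¹ * √(π / (s / (2 * v))) = s ^ (-(1 / 2 : ℝ)) := by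
    rw [rpow_neg hc.le, ← sqrt_eq_rpow, show π / (s / (2 * v)) = 2 * π * v / s by field_simp,
      sqrt_div' _ hc.le]
    field_simp
  simp_rw [integral_gaussianReal_eq_integral_smul hv, gaussianPDFReal, smul_eq_mul,
    mul_assoc _ (exp _), ← exp_add, complete_square, exp_add, integral_const_mul,
    integral_sub_right_eq_self (fun x ↦ exp (-(s / (2 * v)) * x ^ 2)), integral_gaussian]
  rw [← sqrt_ratio]
  ring

lemma one_add_mul_rpow_neg_half_le {β t ρ : ℝ} (hβ : 0 ≤ β) (ht₀ : 0 ≤ t) (ht₁ : t ≤ 1)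
    (hρ : ρ ≤ t / 2) :
    (1 + t * β) ^ (-(1 / 2 : ℝ)) ≤ (1 + β) ^ (-ρ) :=
  calc (1 + t * β) ^ (-(1 / 2 : ℝ))
      ≤ ((1 + β) ^ t) ^ (-(1 / 2 : ℝ)) := by
        refine rpow_le_rpow_of_nonpos (by positivity) ?_ (by norm_num)
        exact rpow_one_add_le_one_add_mul_self (by linarith) ht₀ ht₁
    _ = (1 + β) ^ (-(t / 2)) := by rw [← rpow_mul (by positivity)]; ring_nf
    _ ≤ (1 + β) ^ (-ρ) := rpow_le_rpow_of_exponent_le (by linarith) (by linarith)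

/-- Classical-Gaussian specialization of the `G`-heat-equation estimate: for
`0 < σ̲ ≤ σ ≤ σ̄`, `β > 0`, `a ∈ ℝ` and `Z ~ N(0,σ²)`,
`E[exp(−β(a+Z)²/(2σ̄²))] ≤ (1+β)^{−ρ} · exp(−βa²/(2(1+β)σ̄²))` with `ρ = σ̲²/(2σ̄²)`. -/
theorem gaussian_exp_quadratic_estimate
    {Ω : Type*} [MeasurableSpace Ω] (P : Measure Ω) [IsProbabilityMeasure P]
    (Z : Ω → ℝ) (hZmeas : Measurable Z)
    (σlow σ σup : ℝ) (h1 : 0 < σlow) (h2 : σlow ≤ σ) (h3 : σ ≤ σup)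
    (hZ : Measure.map Z P = gaussianReal 0 ⟨σ ^ 2, sq_nonneg σ⟩)
    (β a : ℝ) (hβ : 0 < β) :
    ∫ ω, Real.exp (-(β * (a + Z ω) ^ 2) / (2 * σup ^ 2)) ∂P
      ≤ (1 + β) ^ (-(σlow ^ 2 / (2 * σup ^ 2)))
        * Real.exp (-(β * a ^ 2) / (2 * (1 + β) * σup ^ 2)) := by
  set v : ℝ≥0 := ⟨σ ^ 2, sq_nonneg σ⟩
  have hσ : 0 < σ := h1.trans_le h2
  have hσup : 0 < σup := hσ.trans_le h3
  set c := β / (2 * σup ^ 2)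
  set t := σ ^ 2 / σup ^ 2
  have ht₁ : t ≤ 1 := (div_le_one (by positivity)).2 (pow_le_pow_left₀ hσ.le h3 2)
  have hct : 2 * c * v = t * β := by
    change 2 * c * σ ^ 2 = t * β
    simp only [c, t]
    field_simp
  have hlaw : HasLaw (a + Z ·) (gaussianReal (0 + a) v) P :=
    gaussianReal_const_add ⟨hZmeas.aemeasurable, hZ⟩ a
  calc ∫ ω, exp (-(β * (a + Z ω) ^ 2) / (2 * σup ^ 2)) ∂P
      = ∫ x, exp (-c * x ^ 2) ∂gaussianReal (0 + a) v := by
        rw [← hlaw.integral_comp (by fun_prop)]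
        congr with ω
        simp only [Function.comp_apply, c]
        ring_nf
    _ = (1 + t * β) ^ (-(1 / 2 : ℝ)) * exp (-c * a ^ 2 / (1 + t * β)) := by
        rw [integral_exp_neg_mul_sq_gaussianReal _ _ (by rw [hct]; positivity), hct, zero_add]
    _ ≤ (1 + β) ^ (-(σlow ^ 2 / (2 * σup ^ 2))) * exp (-c * a ^ 2 / (1 + β)) := by
        gcongr ?_ * exp ?_
        · exact one_add_mul_rpow_neg_half_le hβ.le (by positivity) ht₁
            (by simp only [t]; rw [div_div, mul_comm (σup ^ 2)]; gcongr)
        · rw [neg_mul, neg_div, neg_div, neg_le_neg_iff]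
          gcongr
          exact mul_le_of_le_one_left hβ.le ht₁
    _ = (1 + β) ^ (-(σlow ^ 2 / (2 * σup ^ 2)))
          * exp (-(β * a ^ 2) / (2 * (1 + β) * σup ^ 2)) := by
        simp only [c]; congr 2; field_simp
end

section
/- (Threshold choice, classical instantiation of Theorem 4.1.) Under the setup of the missed-detection bound — (Ω, F, P) a probability space with jointly independent X₁, ε₁, Z₁, …, Xₙ, εₙ, Zₙ; Zᵢ ~ N(0,σᵢ²) with 0 < σ̲ ≤ σᵢ ≤ σ̄; εᵢ nonnegative identically distributed; |Xᵢ| ≥ σ̲_X > 0 a.s. — let β > 0, p > 0, and set λ := −(2σ̄²n/β)·ln( E[exp(−βσ̲_X²ε₁²/(2σ̄²(1+β)))] ) + (σ̲²n/β)·ln(1+β) + (2σ̄²/β)·ln p. Then P( Σᵢ₌₁ⁿ (εᵢXᵢ + Zᵢ)² ≤ λ ) ≤ p. -/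
/-!
Chernoff's bound at `t = β / (2σ̄²)` gives `P(S ≤ λ) ≤ e^{tλ} ∏ᵢ E[e^{-t Yᵢ}]` with
`Yᵢ = (εᵢXᵢ + Zᵢ)²`; the expectation factorises because the triples `(Xᵢ, εᵢ, Zᵢ)` are
independent. Completing the square against the Gaussian density of `Zᵢ` gives
`E[e^{-t(A + Zᵢ)²}] = (1 + 2tσᵢ²)^{-1/2} E[e^{-tA²/(1 + 2tσᵢ²)}]` for `A = εᵢXᵢ` independent of
`Zᵢ`; since `σ̲ ≤ σᵢ ≤ σ̄` and `A² ≥ σ̲_X² εᵢ²`, each factor is at most `(1 + 2tσ̲²)^{-1/2} M`,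
where `M` is the expectation appearing in `λ`. With `s = σ̲²/σ̄² ≤ 1`, the choice of `λ` turns the
bound into `p · ((1 + β)^{s/2} (1 + sβ)^{-1/2})ⁿ`, and Bernoulli's inequality
`(1 + β)^s ≤ 1 + sβ` makes the bracket at most `1`.
-/

open MeasureTheory ProbabilityTheory Real Finset
open scoped NNReal

-- The joint law of the flat family is a product measure, and regrouping its coordinates into
-- triples carries it to the product of the laws of the triples.
lemma ProbabilityTheory.iIndepFun.iIndepFun_prodMk_sumElim {Ω ι β : Type*} [MeasurableSpace Ω]
    {P : Measure Ω} [MeasurableSpace β] [Fintype ι] {X Y Z : ι → Ω → β}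
    (hX : ∀ i, Measurable (X i)) (hY : ∀ i, Measurable (Y i)) (hZ : ∀ i, Measurable (Z i))
    (h : iIndepFun (Sum.elim X (Sum.elim Y Z)) P) :
    iIndepFun (fun i ω ↦ (X i ω, Y i ω, Z i ω)) P := by
  have := h.isProbabilityMeasure
  have hF : ∀ j, Measurable (Sum.elim X (Sum.elim Y Z) j) :=
    Sum.forall.2 ⟨hX, Sum.forall.2 ⟨hY, hZ⟩⟩
  have (i : ι) := Measure.isProbabilityMeasure_map (μ := P) (hX i).aemeasurable
  have (i : ι) := Measure.isProbabilityMeasure_map (μ := P) (hY i).aemeasurable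
  have (i : ι) := Measure.isProbabilityMeasure_map (μ := P) (hZ i).aemeasurable
  have hlaw (i : ι) : P.map (fun ω ↦ (X i ω, Y i ω, Z i ω))
      = (P.map (X i)).prod ((P.map (Y i)).prod (P.map (Z i))) := by
    have hXYZ : IndepFun (X i) (fun ω ↦ (Y i ω, Z i ω)) P :=
      (h.indepFun_prodMk hF (.inr (.inl i)) (.inr (.inr i)) (.inl i) (by simp) (by simp)).symm
    have hYZ : IndepFun (Y i) (Z i) P :=
      h.indepFun (i := .inr (.inl i)) (j := .inr (.inr i)) (by simp)
    rw [(indepFun_iff_map_prod_eq_prod_map_map (hX i).aemeasurable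
      ((hY i).prodMk (hZ i)).aemeasurable).1 hXYZ,
      (indepFun_iff_map_prod_eq_prod_map_map (hY i).aemeasurable (hZ i).aemeasurable).1 hYZ]
  have hgroup : MeasurePreserving
      (fun v : ι ⊕ (ι ⊕ ι) → β ↦ fun i ↦ (v (.inl i), v (.inr (.inl i)), v (.inr (.inr i))))
      (Measure.pi fun j ↦ P.map (Sum.elim X (Sum.elim Y Z) j))
      (Measure.pi fun i ↦ (P.map (X i)).prod ((P.map (Y i)).prod (P.map (Z i)))) :=
    (measurePreserving_arrowProdEquivProdArrow β (β × β) ι (fun i ↦ P.map (X i)) _).symm.comp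
      (((MeasurePreserving.id _).prod
        (measurePreserving_arrowProdEquivProdArrow β β ι _ _).symm).comp
      (((MeasurePreserving.id _).prod
        (measurePreserving_sumPiEquivProdPi (fun j ↦ P.map (Sum.elim Y Z j)))).comp
      (measurePreserving_sumPiEquivProdPi fun j ↦ P.map (Sum.elim X (Sum.elim Y Z) j))))
  rw [iIndepFun_iff_map_fun_eq_pi_map
    (fun i ↦ ((hX i).prodMk ((hY i).prodMk (hZ i))).aemeasurable)]
  simp_rw [hlaw]
  rw [← hgroup.map_eq, ← (iIndepFun_iff_map_fun_eq_pi_map (fun j ↦ (hF j).aemeasurable)).1 h,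
    Measure.map_map hgroup.measurable (measurable_pi_lambda _ hF)]
  rfl

lemma integral_exp_neg_mul_add_sq_gaussianReal {t : ℝ} (ht : 0 ≤ t) (a : ℝ) (v : ℝ≥0) :
    ∫ z, exp (-(t * (a + z) ^ 2)) ∂gaussianReal 0 v
      = (√(1 + 2 * t * v))⁻¹ * exp (-(t * a ^ 2 / (1 + 2 * t * v))) := by
  rcases eq_or_ne v 0 with rfl | hv
  · simp
  have hv' : (0 : ℝ) < v := by positivity
  set D : ℝ := 1 + 2 * t * v
  have hD : 0 < D := by positivity
  set b : ℝ := D / (2 * v)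
  have hsq (z : ℝ) : gaussianPDFReal 0 v z * exp (-(t * (a + z) ^ 2))
      = (√(2 * π * v))⁻¹ * exp (-(t * a ^ 2 / D)) * exp (-b * (z + 2 * t * v * a / D) ^ 2) := by
    simp only [gaussianPDFReal, mul_assoc, ← exp_add]
    congr 2
    simp only [b, D]
    field_simp
    ring
  rw [integral_gaussianReal_eq_integral_smul hv]
  simp_rw [smul_eq_mul, hsq]
  rw [integral_const_mul, integral_add_right_eq_self (fun z ↦ exp (-b * z ^ 2)),
    integral_gaussian, mul_comm _ (exp _), mul_assoc, mul_comm (exp _)]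
  congr 1
  rw [← Real.sqrt_inv, ← Real.sqrt_inv, ← sqrt_mul (by positivity)]
  congr 1
  simp only [b]
  field_simp

section

variable {Ω : Type*} [MeasurableSpace Ω] {P : Measure Ω}

lemma integrable_exp_neg_of_nonneg [IsFiniteMeasure P] {f : Ω → ℝ}
    (hf : AEStronglyMeasurable f P) (hf0 : ∀ᵐ ω ∂P, 0 ≤ f ω) :
    Integrable (fun ω ↦ exp (-f ω)) P :=
  .of_bound (continuous_exp.comp_aestronglyMeasurable hf.neg) 1 <| by
    filter_upwards [hf0] with ω hω
    simpa [abs_of_pos (exp_pos _)] using hω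

lemma measureReal_le_le_exp_mul_mgf_neg_of_nonneg [IsFiniteMeasure P] {Y : Ω → ℝ}
    (hY : AEStronglyMeasurable Y P) (hY0 : ∀ ω, 0 ≤ Y ω) {t : ℝ} (ht : 0 ≤ t) (lam : ℝ) :
    P.real {ω | Y ω ≤ lam} ≤ exp (t * lam) * mgf Y P (-t) := by
  have hint := integrable_exp_neg_of_nonneg (P := P) (f := fun ω ↦ t * Y ω) (by fun_prop)
    (.of_forall fun ω ↦ mul_nonneg ht (hY0 ω))
  simpa only [neg_neg] using measure_le_le_exp_mul_mgf lam (neg_nonpos.2 ht)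
    (by simpa only [neg_mul] using hint)

variable [IsProbabilityMeasure P] {A W : Ω → ℝ} {v : ℝ≥0} {t : ℝ}

lemma ProbabilityTheory.IndepFun.integral_exp_neg_mul_add_sq_of_map_eq_gaussianReal
    (hA : Measurable A) (hW : Measurable W) (hAW : IndepFun A W P)
    (hWlaw : P.map W = gaussianReal 0 v) (ht : 0 ≤ t) :
    ∫ ω, exp (-(t * (A ω + W ω) ^ 2)) ∂P
      = (√(1 + 2 * t * v))⁻¹ * ∫ ω, exp (-(t * A ω ^ 2 / (1 + 2 * t * v))) ∂P := by
  have := Measure.isProbabilityMeasure_map (μ := P) hA.aemeasurable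
  have := Measure.isProbabilityMeasure_map (μ := P) hW.aemeasurable
  have hcont : Continuous fun q : ℝ × ℝ ↦ exp (-(t * (q.1 + q.2) ^ 2)) := by fun_prop
  have hint : Integrable (fun q : ℝ × ℝ ↦ exp (-(t * (q.1 + q.2) ^ 2)))
      ((P.map A).prod (P.map W)) :=
    integrable_exp_neg_of_nonneg (by fun_prop) (.of_forall fun q ↦ by positivity)
  calc ∫ ω, exp (-(t * (A ω + W ω) ^ 2)) ∂P
      = ∫ q, exp (-(t * (q.1 + q.2) ^ 2)) ∂(P.map fun ω ↦ (A ω, W ω)) :=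
        (integral_map (hA.prodMk hW).aemeasurable hcont.aestronglyMeasurable).symm
    _ = ∫ a, ∫ z, exp (-(t * (a + z) ^ 2)) ∂(P.map W) ∂(P.map A) := by
        rw [(indepFun_iff_map_prod_eq_prod_map_map hA.aemeasurable hW.aemeasurable).1 hAW,
          integral_prod _ hint]
    _ = ∫ a, (√(1 + 2 * t * v))⁻¹ * exp (-(t * a ^ 2 / (1 + 2 * t * v))) ∂(P.map A) := by
        simp_rw [hWlaw, integral_exp_neg_mul_add_sq_gaussianReal ht]
    _ = _ := by rw [integral_const_mul, integral_map hA.aemeasurable (by fun_prop)]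

lemma ProbabilityTheory.IndepFun.integral_exp_neg_mul_add_sq_le (hA : Measurable A)
    (hW : Measurable W) (hAW : IndepFun A W P) (hWlaw : P.map W = gaussianReal 0 v) (ht : 0 ≤ t)
    {vlow κ : ℝ} (hvlow0 : 0 ≤ vlow) (hvlow : vlow ≤ v) (hκ : 1 + 2 * t * v ≤ κ) {B : Ω → ℝ}
    (hB : AEStronglyMeasurable B P) (hB0 : ∀ᵐ ω ∂P, 0 ≤ B ω) (hBA : ∀ᵐ ω ∂P, B ω ≤ A ω ^ 2) :
    ∫ ω, exp (-(t * (A ω + W ω) ^ 2)) ∂P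
      ≤ (√(1 + 2 * t * vlow))⁻¹ * ∫ ω, exp (-(t * B ω / κ)) ∂P := by
  have hD : 0 < 1 + 2 * t * v := by positivity
  rw [hAW.integral_exp_neg_mul_add_sq_of_map_eq_gaussianReal hA hW hWlaw ht]
  gcongr ?_ * ?_
  · have : 0 < 1 + 2 * t * vlow := by positivity
    gcongr
  · have hκ0 : 0 < κ := hD.trans_le hκ
    refine integral_mono_ae
      (integrable_exp_neg_of_nonneg (by fun_prop) (.of_forall fun ω ↦ by positivity))
      (integrable_exp_neg_of_nonneg (by fun_prop) (by filter_upwards [hB0] with ω h; positivity)) ?_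
    filter_upwards [hB0, hBA] with ω h0 h
    gcongr

lemma mgf_neg_sq_mul_add_le {e x z : Ω → ℝ} (he : Measurable e) (hx : Measurable x)
    (hz : Measurable z) (hind : IndepFun (fun ω ↦ e ω * x ω) z P) {s σlow σup σX β : ℝ}
    (hzlaw : P.map z = gaussianReal 0 ⟨s ^ 2, sq_nonneg s⟩) (hσlow : 0 < σlow) (hs : σlow ≤ s)
    (hsup : s ≤ σup) (hσX : 0 < σX) (hxlow : ∀ᵐ ω ∂P, σX ≤ |x ω|) (hβ : 0 < β) :
    mgf (fun ω ↦ (e ω * x ω + z ω) ^ 2) P (-(β / (2 * σup ^ 2)))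
      ≤ (√(1 + 2 * (β / (2 * σup ^ 2)) * σlow ^ 2))⁻¹
        * ∫ ω, exp (-(β * σX ^ 2 * e ω ^ 2) / (2 * σup ^ 2 * (1 + β))) ∂P := by
  have hσup : 0 < σup := hσlow.trans_le (hs.trans hsup)
  set t := β / (2 * σup ^ 2) with ht
  have hκ : 1 + 2 * t * s ^ 2 ≤ 1 + β := by
    have : t * s ^ 2 ≤ t * σup ^ 2 := by
      gcongr
      exact hσlow.le.trans hs
    have : t * σup ^ 2 = β / 2 := by rw [ht]; field_simp
    linarith
  have hB : ∀ᵐ ω ∂P, σX ^ 2 * e ω ^ 2 ≤ (e ω * x ω) ^ 2 := by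
    filter_upwards [hxlow] with ω hω
    rw [mul_pow, mul_comm, ← sq_abs (x ω)]
    gcongr
  calc mgf (fun ω ↦ (e ω * x ω + z ω) ^ 2) P (-t)
      = ∫ ω, exp (-(t * (e ω * x ω + z ω) ^ 2)) ∂P := by simp only [mgf, neg_mul]
    _ ≤ (√(1 + 2 * t * σlow ^ 2))⁻¹ * ∫ ω, exp (-(t * (σX ^ 2 * e ω ^ 2) / (1 + β))) ∂P :=
      hind.integral_exp_neg_mul_add_sq_le (by fun_prop) hz hzlaw (by positivity) (sq_nonneg _)
        (pow_le_pow_left₀ hσlow.le hs 2) hκ (by fun_prop) (.of_forall fun ω ↦ by positivity) hB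
    _ = _ := by
      congr 1
      refine integral_congr_ae (.of_forall fun ω ↦ ?_)
      simp only [t]
      congr 1
      field_simp

end

lemma mul_log_one_add_le_log_one_add_mul {s x : ℝ} (hs0 : 0 ≤ s) (hs1 : s ≤ 1) (hx : -1 < x) :
    s * log (1 + x) ≤ log (1 + s * x) := by
  rw [← log_rpow (by linarith)]
  exact log_le_log (by apply rpow_pos_of_pos; linarith)
    (rpow_one_add_le_one_add_mul_self hx.le hs0 hs1)

lemma exp_mul_threshold_mul_pow_le (n : ℕ) {β p M σlow σup : ℝ} (hβ : 0 < β) (hp : 0 < p)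
    (hM : 0 < M) (hσlow : 0 < σlow) (hσle : σlow ≤ σup) :
    exp (β / (2 * σup ^ 2) * (-(2 * σup ^ 2 * n / β) * log M
        + (σlow ^ 2 * n / β) * log (1 + β) + (2 * σup ^ 2 / β) * log p))
      * ((√(1 + 2 * (β / (2 * σup ^ 2)) * σlow ^ 2))⁻¹ * M) ^ n ≤ p := by
  have hσup : 0 < σup := hσlow.trans_le hσle
  set s := σlow ^ 2 / σup ^ 2 with hs
  have hs1 : s ≤ 1 := (div_le_one (by positivity)).2 (pow_le_pow_left₀ hσlow.le hσle 2)
  have hD : 1 + 2 * (β / (2 * σup ^ 2)) * σlow ^ 2 = 1 + s * β := by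
    rw [hs]; field_simp
  have hpow : ((√(1 + s * β))⁻¹ * M) ^ n = exp (n * (log M - log (1 + s * β) / 2)) := by
    rw [← exp_log (by positivity : 0 < ((√(1 + s * β))⁻¹ * M) ^ n), log_pow,
      log_mul (by positivity) hM.ne', log_inv, log_sqrt (by positivity)]
    ring_nf
  have hexponent : β / (2 * σup ^ 2) * (-(2 * σup ^ 2 * n / β) * log M
        + (σlow ^ 2 * n / β) * log (1 + β) + (2 * σup ^ 2 / β) * log p)
        + n * (log M - log (1 + s * β) / 2)
      = log p - n / 2 * (log (1 + s * β) - s * log (1 + β)) := by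
    rw [hs]; field_simp; ring
  have hconcave := mul_log_one_add_le_log_one_add_mul (by positivity) hs1 (by linarith : -1 < β)
  rw [hD, hpow, ← exp_add, hexponent]
  calc _ ≤ exp (log p) :=
        exp_le_exp.2 (sub_le_self _ (by have := sub_nonneg.2 hconcave; positivity))
    _ = p := exp_log hp

theorem missed_detection_threshold_general
    {Ω : Type*} [MeasurableSpace Ω] (P : Measure Ω) [IsProbabilityMeasure P]
    (n : ℕ) (hn : 0 < n)
    (X ε Z : Fin n → Ω → ℝ)
    (hXmeas : ∀ i, Measurable (X i)) (hεmeas : ∀ i, Measurable (ε i))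
    (hZmeas : ∀ i, Measurable (Z i))
    (hindep : iIndepFun
      (Sum.elim X (Sum.elim ε Z) : (Fin n ⊕ (Fin n ⊕ Fin n)) → Ω → ℝ) P)
    (σ : Fin n → ℝ) (σlow σup : ℝ) (hσlow : 0 < σlow) (hσle : σlow ≤ σup)
    (hσ : ∀ i, σlow ≤ σ i ∧ σ i ≤ σup)
    (hZ : ∀ i, Measure.map (Z i) P = gaussianReal 0 ⟨(σ i) ^ 2, sq_nonneg (σ i)⟩)
    (hεid : ∀ i, Measure.map (ε i) P = Measure.map (ε ⟨0, hn⟩) P)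
    (σX : ℝ) (hσX : 0 < σX)
    (hX : ∀ i, ∀ᵐ ω ∂P, σX ≤ |X i ω|)
    (β p : ℝ) (hβ : 0 < β) (hp : 0 < p)
    (lam : ℝ)
    (hlam : lam = -(2 * σup ^ 2 * n / β)
        * Real.log (∫ ω, Real.exp (-(β * σX ^ 2 * (ε ⟨0, hn⟩ ω) ^ 2)
            / (2 * σup ^ 2 * (1 + β))) ∂P)
      + (σlow ^ 2 * n / β) * Real.log (1 + β)
      + (2 * σup ^ 2 / β) * Real.log p) :
    P {ω | ∑ i, (ε i ω * X i ω + Z i ω) ^ 2 ≤ lam} ≤ ENNReal.ofReal p := by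
  set t := β / (2 * σup ^ 2)
  set g : ℝ → ℝ := fun x ↦ exp (-(β * σX ^ 2 * x ^ 2) / (2 * σup ^ 2 * (1 + β)))
  set M := ∫ ω, g (ε ⟨0, hn⟩ ω) ∂P
  set c := (√(1 + 2 * t * σlow ^ 2))⁻¹
  set Y : Fin n → Ω → ℝ := fun i ω ↦ (ε i ω * X i ω + Z i ω) ^ 2
  have hYmeas (i : Fin n) : Measurable (Y i) := by fun_prop
  have hYindep : iIndepFun Y P :=
    (hindep.iIndepFun_prodMk_sumElim hXmeas hεmeas hZmeas).comp
      (fun _ q ↦ (q.2.1 * q.1 + q.2.2) ^ 2) (fun _ ↦ by fun_prop)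
  have hfactor (i : Fin n) : mgf (Y i) P (-t) ≤ c * M := by
    have hAZ : IndepFun (fun ω ↦ ε i ω * X i ω) (Z i) P :=
      (hindep.indepFun_prodMk (Sum.forall.2 ⟨hXmeas, Sum.forall.2 ⟨hεmeas, hZmeas⟩⟩)
        (.inr (.inl i)) (.inl i) (.inr (.inr i)) (by simp) (by simp)).comp
        (measurable_fst.mul measurable_snd) measurable_id
    refine (mgf_neg_sq_mul_add_le (hεmeas i) (hXmeas i) (hZmeas i) hAZ (hZ i) hσlow (hσ i).1
      (hσ i).2 hσX (hX i) hβ).trans_eq ?_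
    exact congrArg (c * ·) ((IdentDistrib.mk (hεmeas i).aemeasurable (hεmeas _).aemeasurable
      (hεid i)).comp (by fun_prop : Measurable g)).integral_eq
  have hmgf : mgf (∑ i, Y i) P (-t) ≤ (c * M) ^ n := by
    rw [hYindep.mgf_sum hYmeas]
    simpa using prod_le_prod (s := univ) (fun _ _ ↦ mgf_nonneg) fun i _ ↦ hfactor i
  have hchernoff : P.real {ω | ∑ i, Y i ω ≤ lam} ≤ exp (t * lam) * mgf (∑ i, Y i) P (-t) := by
    simpa only [Finset.sum_apply] using measureReal_le_le_exp_mul_mgf_neg_of_nonneg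
      (Y := ∑ i, Y i) (by fun_prop)
      (fun ω ↦ by rw [Finset.sum_apply]; exact sum_nonneg fun i _ ↦ sq_nonneg _)
      (by positivity : 0 ≤ t) lam
  have hM : 0 < M := integral_exp_pos <| by
    simpa only [neg_div] using integrable_exp_neg_of_nonneg (P := P)
      (f := fun ω ↦ β * σX ^ 2 * ε ⟨0, hn⟩ ω ^ 2 / (2 * σup ^ 2 * (1 + β))) (by fun_prop)
      (.of_forall fun ω ↦ by positivity)
  refine (ENNReal.le_ofReal_iff_toReal_le (measure_ne_top _ _) hp.le).2 <|
    hchernoff.trans <| (mul_le_mul_of_nonneg_left hmgf (exp_pos _).le).trans ?_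
  rw [hlam]
  exact exp_mul_threshold_mul_pow_le n hβ hp hM hσlow hσle

/-- Threshold choice (classical instantiation of Theorem 4.1): under the setup of the
missed-detection bound, with
`λ = −(2σ̄²n/β)·ln(E[exp(−βσ̲_X²ε₁²/(2σ̄²(1+β)))]) + (σ̲²n/β)·ln(1+β) + (2σ̄²/β)·ln p`,
one has `P(Σ (εᵢXᵢ+Zᵢ)² ≤ λ) ≤ p`. -/
theorem missed_detection_threshold
    {Ω : Type*} [MeasurableSpace Ω] (P : Measure Ω) [IsProbabilityMeasure P]
    (n : ℕ) (hn : 0 < n)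
    (X ε Z : Fin n → Ω → ℝ)
    (hXmeas : ∀ i, Measurable (X i)) (hεmeas : ∀ i, Measurable (ε i))
    (hZmeas : ∀ i, Measurable (Z i))
    (hindep : iIndepFun
      (Sum.elim X (Sum.elim ε Z) : (Fin n ⊕ (Fin n ⊕ Fin n)) → Ω → ℝ) P)
    (σ : Fin n → ℝ) (σlow σup : ℝ) (hσlow : 0 < σlow) (hσle : σlow ≤ σup)
    (hσ : ∀ i, σlow ≤ σ i ∧ σ i ≤ σup)
    (hZ : ∀ i, Measure.map (Z i) P = gaussianReal 0 ⟨(σ i) ^ 2, sq_nonneg (σ i)⟩)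
    (hεpos : ∀ i, ∀ᵐ ω ∂P, 0 ≤ ε i ω)
    (hεid : ∀ i, Measure.map (ε i) P = Measure.map (ε ⟨0, hn⟩) P)
    (σX : ℝ) (hσX : 0 < σX)
    (hX : ∀ i, ∀ᵐ ω ∂P, σX ≤ |X i ω|)
    (β p : ℝ) (hβ : 0 < β) (hp : 0 < p)
    (lam : ℝ)
    (hlam : lam = -(2 * σup ^ 2 * n / β)
        * Real.log (∫ ω, Real.exp (-(β * σX ^ 2 * (ε ⟨0, hn⟩ ω) ^ 2)
            / (2 * σup ^ 2 * (1 + β))) ∂P)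
      + (σlow ^ 2 * n / β) * Real.log (1 + β)
      + (2 * σup ^ 2 / β) * Real.log p) :
    P {ω | ∑ i, (ε i ω * X i ω + Z i ω) ^ 2 ≤ lam} ≤ ENNReal.ofReal p :=
  missed_detection_threshold_general P n hn X ε Z hXmeas hεmeas hZmeas hindep σ σlow σup hσlow hσle
    hσ hZ hεid σX hσX hX β p hβ hp lam hlam
end

section
/- (Classical instantiation of Corollary 4.1.) Let (Ω, F, P) be a probability space carrying jointly independent real random variables X₁, ε₁, Z₁, …, Xₙ, εₙ, Zₙ such that: each Zᵢ ~ N(0,σᵢ²) with 0 < σ̲ ≤ σᵢ ≤ σ̄; the εᵢ are nonnegative and identically distributed; and |Xᵢ| = σ̄_X almost surely for a constant σ̄_X > 0. Then for every β > 0 and λ ∈ ℝ, P( Σᵢ₌₁ⁿ (εᵢXᵢ + Zᵢ)² ≤ λ ) ≤ exp(βλ/(2σ̄²)) · (1+β)^{−ρn} · ( E[exp(−βε₁²σ̄_X²/(2σ̄²(1+β)))] )ⁿ, where ρ := σ̲²/(2σ̄²). -/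
/-!
Chernoff's bound at `t = β / (2σ̄²)`, together with independence across coordinates, reduces the
claim to bounding each `E[exp (-t (εᵢXᵢ + Zᵢ)²)]`. Integrating out the Gaussian `Zᵢ` (completing
the square) turns it into `E[exp (-t Uᵢ² / cᵢ)] / √cᵢ` with `Uᵢ = εᵢXᵢ` and
`cᵢ = 1 + 2tσᵢ² ∈ [1 + 2ρβ, 1 + β]`. Bernoulli's inequality `(1 + β)^(2ρ) ≤ 1 + 2ρβ` bounds
`1 / √cᵢ` by `(1 + β)^(-ρ)`, while `cᵢ ≤ 1 + β` and `Uᵢ² = εᵢ²σ̄_X²` bound the expectation by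
`E[exp (-β ε₁² σ̄_X² / (2σ̄²(1 + β)))]`.
-/

open MeasureTheory ProbabilityTheory Real Finset
open scoped NNReal ENNReal

lemma Real.inv_sqrt_le_one_add_rpow_neg {β r c : ℝ} (hβ : -1 < β) (hr : 0 ≤ r)
    (hr1 : 2 * r ≤ 1) (hc : 1 + 2 * r * β ≤ c) : (√c)⁻¹ ≤ (1 + β) ^ (-r) := by
  have hβ' : 0 < 1 + β := by linarith
  have hbernoulli : ((1 + β) ^ r) ^ 2 ≤ c := by
    rw [← rpow_mul_natCast hβ'.le, Nat.cast_ofNat, mul_comm]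
    exact (rpow_one_add_le_one_add_mul_self hβ.le (by positivity) hr1).trans hc
  rw [rpow_neg hβ'.le]
  exact inv_anti₀ (by positivity) (le_sqrt_of_sq_le hbernoulli)

namespace ProbabilityTheory

lemma mgf_add_sq_gaussianReal (a : ℝ) (v : ℝ≥0) {t : ℝ} (ht : 0 ≤ t) :
    mgf (fun z ↦ (a + z) ^ 2) (gaussianReal 0 v) (-t) =
      exp (-t / (1 + 2 * t * v) * a ^ 2) / √(1 + 2 * t * v) := by
  rcases eq_or_ne v 0 with rfl | hv
  · simp [mgf, gaussianReal_zero_var]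
  -- `c` and `m` complete the square in `-z² / (2v) - t (a + z)²`
  set c : ℝ := t + 1 / (2 * v)
  set m : ℝ := 2 * t * v * a / (1 + 2 * t * v)
  have hsquare : ∀ z, gaussianPDFReal 0 v z * exp (-t * (a + z) ^ 2) =
      (√(2 * π * v))⁻¹ * exp (-t / (1 + 2 * t * v) * a ^ 2) * exp (-c * (z + m) ^ 2) := by
    intro z
    rw [gaussianPDFReal, mul_assoc, ← exp_add, mul_assoc (√(2 * π * v))⁻¹, ← exp_add]
    congr 2
    simp only [c, m]
    field_simp
    ring
  have hsqrt : √(π / c) = √(2 * π * v) / √(1 + 2 * t * v) := by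
    rw [← sqrt_div (by positivity)]
    congr 1
    simp only [c]
    field_simp
    ring
  rw [mgf, gaussianReal_of_var_ne_zero 0 hv, integral_withDensity_eq_integral_toReal_smul
    (measurable_gaussianPDF 0 v) (ae_of_all _ fun _ ↦ ENNReal.ofReal_lt_top)]
  simp_rw [toReal_gaussianPDF, smul_eq_mul, hsquare]
  rw [integral_const_mul, integral_add_right_eq_self (fun z ↦ exp (-c * z ^ 2)) m,
    integral_gaussian, hsqrt]
  field_simp

lemma integrable_exp_neg_mul_sq {α : Type*} {mα : MeasurableSpace α} {μ : Measure α}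
    [IsFiniteMeasure μ] {f : α → ℝ} (hf : AEMeasurable f μ) {t : ℝ} (ht : 0 ≤ t) :
    Integrable (fun x ↦ exp (-t * f x ^ 2)) μ :=
  .of_bound (by fun_prop) 1 <| ae_of_all _ fun x ↦ by
    rw [norm_of_nonneg (exp_pos _).le, exp_le_one_iff]
    exact mul_nonpos_of_nonpos_of_nonneg (neg_nonpos.2 ht) (sq_nonneg _)

variable {Ω : Type*} {mΩ : MeasurableSpace Ω} {P : Measure Ω}

lemma iIndepFun.curry {ι κ 𝓧 : Type*} [MeasurableSpace 𝓧] {X : ι → κ → Ω → 𝓧}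
    (mX : ∀ i j, Measurable (X i j)) (h : iIndepFun (fun p : ι × κ ↦ X p.1 p.2) P) :
    iIndepFun (fun i ω j ↦ X i j ω) P := by
  have := h.isProbabilityMeasure
  have _ i j := Measure.isProbabilityMeasure_map (μ := P) (mX i j).aemeasurable
  have hcurry : P.map (fun ω i j ↦ X i j ω) =
      Measure.infinitePi fun i ↦ Measure.infinitePi fun j ↦ P.map (X i j) := by
    rw [← Measure.infinitePi_map_curry,
      ← h.map_fun_eq_infinitePi_map fun p : ι × κ ↦ mX p.1 p.2,
      Measure.map_map (by fun_prop) (by fun_prop)]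
    rfl
  rw [iIndepFun_iff_map_fun_eq_infinitePi_map (by fun_prop), hcurry]
  congr 1
  ext1 i
  rw [← Measure.infinitePi_map_eval (fun i ↦ Measure.infinitePi fun j ↦ P.map (X i j)) i,
    ← hcurry, Measure.map_map (by fun_prop) (by fun_prop)]
  rfl

lemma iIndepFun.prodMk_of_sumElim {ι 𝓧 : Type*} [MeasurableSpace 𝓧] {X Y Z : ι → Ω → 𝓧}
    (mX : ∀ i, Measurable (X i)) (mY : ∀ i, Measurable (Y i)) (mZ : ∀ i, Measurable (Z i))
    (h : iIndepFun (Sum.elim X (Sum.elim Y Z)) P) :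
    iIndepFun (fun i ω ↦ (X i ω, Y i ω, Z i ω)) P := by
  let e : ι × Fin 3 → ι ⊕ (ι ⊕ ι) := fun p ↦
    ![Sum.inl p.1, Sum.inr (Sum.inl p.1), Sum.inr (Sum.inr p.1)] p.2
  have he : e.Injective := by
    rintro ⟨i, k⟩ ⟨j, l⟩ hij
    fin_cases k <;> fin_cases l <;> simp_all [e]
  have mW : ∀ p, Measurable (Sum.elim X (Sum.elim Y Z) (e p)) := by
    rintro ⟨i, k⟩
    fin_cases k
    exacts [mX i, mY i, mZ i]
  have hblocks := (h.precomp he).curry (X := fun i k ↦ Sum.elim X (Sum.elim Y Z) (e (i, k)))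
    fun i k ↦ mW (i, k)
  exact hblocks.comp (fun _ v ↦ (v 0, v 1, v 2)) fun _ ↦ by fun_prop

lemma measureReal_sum_le_le_exp_mul_pow {ι : Type*} {Y : ι → Ω → ℝ} {t b : ℝ}
    (hY : iIndepFun Y P) (mY : ∀ i, Measurable (Y i)) (ht : t ≤ 0) {s : Finset ι}
    (hint : ∀ i ∈ s, Integrable (fun ω ↦ exp (t * Y i ω)) P) (hb : ∀ i ∈ s, mgf (Y i) P t ≤ b)
    (l : ℝ) :
    P.real {ω | ∑ i ∈ s, Y i ω ≤ l} ≤ exp (-t * l) * b ^ s.card := by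
  have := hY.isProbabilityMeasure
  have hchernoff : P.real {ω | ∑ i ∈ s, Y i ω ≤ l} ≤ exp (-t * l) * ∏ i ∈ s, mgf (Y i) P t := by
    simpa [Finset.sum_apply, hY.mgf_sum mY] using
      measure_le_le_exp_mul_mgf (X := ∑ i ∈ s, Y i) l ht (hY.integrable_exp_mul_sum mY hint)
  refine hchernoff.trans ?_
  gcongr
  exact (prod_le_prod (fun _ _ ↦ mgf_nonneg) hb).trans_eq (prod_const b)

lemma IndepFun.mgf_add_sq_of_map_eq_gaussianReal [IsProbabilityMeasure P] {U Z : Ω → ℝ}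
    {v : ℝ≥0} {t : ℝ} (hUZ : IndepFun U Z P) (mU : Measurable U) (mZ : Measurable Z)
    (hZ : P.map Z = gaussianReal 0 v) (ht : 0 ≤ t) :
    mgf (fun ω ↦ (U ω + Z ω) ^ 2) P (-t) =
      mgf (fun ω ↦ U ω ^ 2) P (-t / (1 + 2 * t * v)) / √(1 + 2 * t * v) := by
  have hlaw : P.map (fun ω ↦ (U ω, Z ω)) = (P.map U).prod (gaussianReal 0 v) := by
    rw [← hZ]
    exact (indepFun_iff_map_prod_eq_prod_map_map mU.aemeasurable mZ.aemeasurable).1 hUZ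
  calc mgf (fun ω ↦ (U ω + Z ω) ^ 2) P (-t)
      = ∫ p : ℝ × ℝ, exp (-t * (p.1 + p.2) ^ 2) ∂(P.map fun ω ↦ (U ω, Z ω)) := by
        rw [integral_map (mU.prodMk mZ).aemeasurable (by fun_prop)]
        rfl
    _ = ∫ u, mgf (fun z ↦ (u + z) ^ 2) (gaussianReal 0 v) (-t) ∂(P.map U) := by
        rw [hlaw, integral_prod _ (integrable_exp_neg_mul_sq (by fun_prop) ht)]
        rfl
    _ = ∫ u, exp (-t / (1 + 2 * t * v) * u ^ 2) / √(1 + 2 * t * v) ∂(P.map U) := by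
        simp_rw [mgf_add_sq_gaussianReal _ v ht]
    _ = mgf (fun ω ↦ U ω ^ 2) P (-t / (1 + 2 * t * v)) / √(1 + 2 * t * v) := by
        rw [integral_map mU.aemeasurable (by fun_prop), integral_div]
        rfl

lemma mgf_sq_le_of_le [IsFiniteMeasure P] {U : Ω → ℝ} (mU : AEMeasurable U P) {s s' : ℝ}
    (hss' : s ≤ s') (hs' : s' ≤ 0) :
    mgf (fun ω ↦ U ω ^ 2) P s ≤ mgf (fun ω ↦ U ω ^ 2) P s' := by
  refine integral_mono_of_nonneg (ae_of_all _ fun _ ↦ (exp_pos _).le) ?_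
    (ae_of_all _ fun ω ↦ exp_le_exp.2 (mul_le_mul_of_nonneg_right hss' (sq_nonneg _)))
  simpa using integrable_exp_neg_mul_sq mU (neg_nonneg.2 hs')

lemma IndepFun.mgf_add_sq_le_of_map_eq_gaussianReal [IsProbabilityMeasure P] {U Z : Ω → ℝ}
    {v : ℝ≥0} {t β r : ℝ} (hUZ : IndepFun U Z P) (mU : Measurable U) (mZ : Measurable Z)
    (hZ : P.map Z = gaussianReal 0 v) (ht : 0 ≤ t) (hr : 0 ≤ r) (hr1 : 2 * r ≤ 1)
    (hlow : r * β ≤ t * v) (hup : 2 * t * v ≤ β) :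
    mgf (fun ω ↦ (U ω + Z ω) ^ 2) P (-t) ≤
      (1 + β) ^ (-r) * mgf (fun ω ↦ U ω ^ 2) P (-t / (1 + β)) := by
  have htv : 0 ≤ t * v := by positivity
  rw [hUZ.mgf_add_sq_of_map_eq_gaussianReal mU mZ hZ ht, div_eq_inv_mul]
  refine mul_le_mul (inv_sqrt_le_one_add_rpow_neg (by linarith) hr hr1 (by linarith))
    (mgf_sq_le_of_le mU.aemeasurable ?_ ?_) mgf_nonneg (rpow_nonneg (by linarith) _)
  · rw [neg_div, neg_div, neg_le_neg_iff]
    exact div_le_div_of_nonneg_left ht (by positivity) (by linarith)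
  · exact div_nonpos_of_nonpos_of_nonneg (by linarith) (by linarith)

lemma IndepFun.mgf_add_sq_le_of_map_eq_gaussianReal_of_mem_Icc [IsProbabilityMeasure P]
    {U Z : Ω → ℝ} {σ σlow σup β : ℝ} (hUZ : IndepFun U Z P) (mU : Measurable U)
    (mZ : Measurable Z) (hZ : P.map Z = gaussianReal 0 ⟨σ ^ 2, sq_nonneg σ⟩)
    (hσlow : 0 < σlow) (hσ : σ ∈ Set.Icc σlow σup) (hβ : 0 ≤ β) :
    mgf (fun ω ↦ (U ω + Z ω) ^ 2) P (-(β / (2 * σup ^ 2))) ≤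
      (1 + β) ^ (-(σlow ^ 2 / (2 * σup ^ 2))) *
        mgf (fun ω ↦ U ω ^ 2) P (-(β / (2 * σup ^ 2)) / (1 + β)) := by
  obtain ⟨hσlow_le, hle_σup⟩ := hσ
  have hσlow_sq : σlow ^ 2 ≤ σ ^ 2 := pow_le_pow_left₀ hσlow.le hσlow_le 2
  have hσup_sq : σ ^ 2 ≤ σup ^ 2 := pow_le_pow_left₀ (hσlow.trans_le hσlow_le).le hle_σup 2
  have hσup : 0 < σup := hσlow.trans_le (hσlow_le.trans hle_σup)
  refine hUZ.mgf_add_sq_le_of_map_eq_gaussianReal mU mZ hZ (by positivity) (by positivity)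
    ?_ ?_ ?_
  · field_simp
    linarith
  · change σlow ^ 2 / (2 * σup ^ 2) * β ≤ β / (2 * σup ^ 2) * σ ^ 2
    field_simp
    nlinarith
  · change 2 * (β / (2 * σup ^ 2)) * σ ^ 2 ≤ β
    field_simp
    nlinarith

lemma mgf_mul_sq_of_abs_eq {ε X : Ω → ℝ} {c : ℝ} (hX : ∀ᵐ ω ∂P, |X ω| = c) (s : ℝ) :
    mgf (fun ω ↦ (ε ω * X ω) ^ 2) P s = mgf (fun ω ↦ ε ω ^ 2) P (s * c ^ 2) :=
  integral_congr_ae <| by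
    filter_upwards [hX] with ω hω
    rw [mul_pow, ← sq_abs (X ω), hω, mul_comm (ε ω ^ 2), mul_assoc]

end ProbabilityTheory

theorem missed_detection_bound_max_signal_general
    {Ω : Type*} [MeasurableSpace Ω] (P : Measure Ω) [IsProbabilityMeasure P]
    (n : ℕ) (hn : 0 < n)
    (X ε Z : Fin n → Ω → ℝ)
    (hXmeas : ∀ i, Measurable (X i)) (hεmeas : ∀ i, Measurable (ε i))
    (hZmeas : ∀ i, Measurable (Z i))
    (hindep : iIndepFun
      (Sum.elim X (Sum.elim ε Z) : (Fin n ⊕ (Fin n ⊕ Fin n)) → Ω → ℝ) P)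
    (σ : Fin n → ℝ) (σlow σup : ℝ) (hσlow : 0 < σlow)
    (hσ : ∀ i, σlow ≤ σ i ∧ σ i ≤ σup)
    (hZ : ∀ i, Measure.map (Z i) P = gaussianReal 0 ⟨(σ i) ^ 2, sq_nonneg (σ i)⟩)
    (hεid : ∀ i, Measure.map (ε i) P = Measure.map (ε ⟨0, hn⟩) P)
    (σX : ℝ)
    (hX : ∀ i, ∀ᵐ ω ∂P, |X i ω| = σX)
    (β lam : ℝ) (hβ : 0 < β) :
    P {ω | ∑ i, (ε i ω * X i ω + Z i ω) ^ 2 ≤ lam}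
      ≤ ENNReal.ofReal
        (Real.exp (β * lam / (2 * σup ^ 2))
          * (1 + β) ^ (-(σlow ^ 2 / (2 * σup ^ 2)) * n)
          * (∫ ω, Real.exp (-(β * (ε ⟨0, hn⟩ ω) ^ 2 * σX ^ 2)
              / (2 * σup ^ 2 * (1 + β))) ∂P) ^ n) := by
  set t := β / (2 * σup ^ 2) with ht_def
  set ρ := σlow ^ 2 / (2 * σup ^ 2)
  set I := ∫ ω, exp (-(β * (ε ⟨0, hn⟩ ω) ^ 2 * σX ^ 2) / (2 * σup ^ 2 * (1 + β))) ∂P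
  have ht : 0 ≤ t := by positivity
  have hY : iIndepFun (fun i ω ↦ (ε i ω * X i ω + Z i ω) ^ 2) P :=
    (hindep.prodMk_of_sumElim hXmeas hεmeas hZmeas).comp
      (fun _ p ↦ (p.2.1 * p.1 + p.2.2) ^ 2) fun _ ↦ by fun_prop
  have hsignal : ∀ i, mgf (fun ω ↦ (ε i ω * X i ω) ^ 2) P (-t / (1 + β)) = I := by
    intro i
    have hε : IdentDistrib (ε i) (ε ⟨0, hn⟩) P P :=
      ⟨(hεmeas i).aemeasurable, (hεmeas _).aemeasurable, hεid i⟩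
    rw [mgf_mul_sq_of_abs_eq (hX i), mgf_congr_identDistrib (X := fun ω ↦ ε i ω ^ 2)
      (Y := fun ω ↦ ε ⟨0, hn⟩ ω ^ 2) (hε.comp (u := fun x : ℝ ↦ x ^ 2) (by fun_prop))]
    unfold mgf I
    congr with ω
    rw [ht_def]
    field_simp
  have hterm : ∀ i ∈ univ,
      mgf (fun ω ↦ (ε i ω * X i ω + Z i ω) ^ 2) P (-t) ≤ (1 + β) ^ (-ρ) * I := by
    intro i _
    have hUZ : IndepFun (fun ω ↦ ε i ω * X i ω) (Z i) P :=
      (hindep.indepFun_prodMk (Sum.forall.2 ⟨hXmeas, Sum.forall.2 ⟨hεmeas, hZmeas⟩⟩)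
        (.inr (.inl i)) (.inl i) (.inr (.inr i)) (by simp) (by simp)).comp
        (measurable_fst.mul measurable_snd) measurable_id
    rw [← hsignal i]
    exact hUZ.mgf_add_sq_le_of_map_eq_gaussianReal_of_mem_Icc (by fun_prop) (hZmeas i) (hZ i)
      hσlow (hσ i) hβ.le
  rw [← ofReal_measureReal]
  refine ENNReal.ofReal_le_ofReal <| (measureReal_sum_le_le_exp_mul_pow hY (fun i ↦ by fun_prop)
    (neg_nonpos.2 ht) (fun i _ ↦ integrable_exp_neg_mul_sq (by fun_prop) ht) hterm lam).trans_eq ?_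
  rw [card_univ, Fintype.card_fin, mul_pow, ← rpow_mul_natCast (by positivity), ← mul_assoc,
    ht_def]
  congr 3
  ring

/-- Classical instantiation of Corollary 4.1: same setting as the missed-detection bound
but with `|Xᵢ| = σ̄_X` a.s.; the bound holds with `σ̄_X` in place of `σ̲_X`. -/
theorem missed_detection_bound_max_signal
    {Ω : Type*} [MeasurableSpace Ω] (P : Measure Ω) [IsProbabilityMeasure P]
    (n : ℕ) (hn : 0 < n)
    (X ε Z : Fin n → Ω → ℝ)
    (hXmeas : ∀ i, Measurable (X i)) (hεmeas : ∀ i, Measurable (ε i))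
    (hZmeas : ∀ i, Measurable (Z i))
    (hindep : iIndepFun
      (Sum.elim X (Sum.elim ε Z) : (Fin n ⊕ (Fin n ⊕ Fin n)) → Ω → ℝ) P)
    (σ : Fin n → ℝ) (σlow σup : ℝ) (hσlow : 0 < σlow) (hσle : σlow ≤ σup)
    (hσ : ∀ i, σlow ≤ σ i ∧ σ i ≤ σup)
    (hZ : ∀ i, Measure.map (Z i) P = gaussianReal 0 ⟨(σ i) ^ 2, sq_nonneg (σ i)⟩)
    (hεpos : ∀ i, ∀ᵐ ω ∂P, 0 ≤ ε i ω)
    (hεid : ∀ i, Measure.map (ε i) P = Measure.map (ε ⟨0, hn⟩) P)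
    (σX : ℝ) (hσX : 0 < σX)
    (hX : ∀ i, ∀ᵐ ω ∂P, |X i ω| = σX)
    (β lam : ℝ) (hβ : 0 < β) :
    P {ω | ∑ i, (ε i ω * X i ω + Z i ω) ^ 2 ≤ lam}
      ≤ ENNReal.ofReal
        (Real.exp (β * lam / (2 * σup ^ 2))
          * (1 + β) ^ (-(σlow ^ 2 / (2 * σup ^ 2)) * n)
          * (∫ ω, Real.exp (-(β * (ε ⟨0, hn⟩ ω) ^ 2 * σX ^ 2)
              / (2 * σup ^ 2 * (1 + β))) ∂P) ^ n) :=
  missed_detection_bound_max_signal_general P n hn X ε Z hXmeas hεmeas hZmeas hindep σ σlow σup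
    hσlow hσ hZ hεid σX hX β lam hβ
end

section
/- (Example 4.2, Rayleigh fading: limits of k_β and existence of a valid β.) Let 0 < σ̲ ≤ σ̄, σ > 0, σ̲_X > 0, and for β > 0 define k_β := (2σ̄²/β)·ln( (β(σ²σ̲_X² + σ̄²) + σ̄²)/(βσ̄² + σ̄²) ) + (σ̲²/β)·ln(1+β). Then k_β → 2σ̲_X²σ² + σ̲² as β → 0⁺ and k_β → 0 as β → ∞. Moreover, if 2σ̲_X²σ² + σ̲² > σ̄², then there exists β > 0 such that k_β > σ̄² and 1/2 − (1/2)·ln(σ̄²/k_β) − k_β/(2σ̄²) < 0. -/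
open Real Filter Set Topology

/-!
With `c = 1 + σ²σ_X²/σ̄²` the first logarithm in `k_β` is `log (1 + cβ) - log (1 + β)`, so `k_β`
is a linear combination of the slopes `log (1 + aβ) / β`. These tend to `a` as `β → 0⁺` (the
derivative of `log (1 + a x)` at `0`) and to `0` as `β → ∞`. For the last claim take `β` near `0`,
so that `x = k_β / σ̄² > 1`, and use `log x < x - 1`.
-/

theorem tendsto_log_one_add_mul_div_nhdsNE (c : ℝ) :
    Tendsto (fun x => log (1 + c * x) / x) (𝓝[≠] 0) (𝓝 c) := by
  have hderiv : HasDerivAt (fun x => log (1 + c * x)) c 0 := by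
    simpa using (((hasDerivAt_id (0 : ℝ)).const_mul c).const_add 1).log (by simp)
  simpa [div_eq_inv_mul] using hasDerivAt_iff_tendsto_slope_zero.mp hderiv

theorem tendsto_log_one_add_mul_div_atTop {c : ℝ} (hc : 0 < c) :
    Tendsto (fun x => log (1 + c * x) / x) atTop (𝓝 0) := by
  have hlin : Tendsto (fun x => 1 + c * x) atTop atTop :=
    tendsto_atTop_add_const_left _ 1 (tendsto_id.const_mul_atTop hc)
  have := (tendsto_pow_log_div_mul_add_atTop c⁻¹ (-c⁻¹) 1 (inv_ne_zero hc.ne')).comp hlin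
  refine this.congr fun x => ?_
  simp only [Function.comp_apply, pow_one]
  congr 1
  field_simp
  ring

theorem half_sub_half_log_div_sub_div_neg {s t : ℝ} (hs : 0 < s) (hst : s < t) :
    1 / 2 - 1 / 2 * log (s / t) - t / (2 * s) < 0 := by
  have ht : 0 < t := hs.trans hst
  have hlog := log_lt_sub_one_of_pos (div_pos ht hs) ((one_lt_div hs).mpr hst).ne'
  rw [log_div ht.ne' hs.ne'] at hlog
  rw [log_div hs.ne' ht.ne', div_mul_eq_div_div_swap]
  linarith

theorem rayleigh_fading_kbeta_general
    (σlow σup σ σX : ℝ) (hσlow : 0 < σlow) (hσle : σlow ≤ σup)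
    (k : ℝ → ℝ)
    (hk : ∀ β, k β = (2 * σup ^ 2 / β)
        * Real.log ((β * (σ ^ 2 * σX ^ 2 + σup ^ 2) + σup ^ 2) / (β * σup ^ 2 + σup ^ 2))
      + (σlow ^ 2 / β) * Real.log (1 + β)) :
    Tendsto k (nhdsWithin 0 (Ioi 0)) (nhds (2 * σX ^ 2 * σ ^ 2 + σlow ^ 2)) ∧
    Tendsto k atTop (nhds 0) ∧
    (σup ^ 2 < 2 * σX ^ 2 * σ ^ 2 + σlow ^ 2 →
      ∃ β : ℝ, 0 < β ∧ σup ^ 2 < k β ∧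
        1 / 2 - (1 / 2) * Real.log (σup ^ 2 / k β) - k β / (2 * σup ^ 2) < 0) := by
  have hσup : σup ≠ 0 := (hσlow.trans_le hσle).ne'
  have hs : 0 < σup ^ 2 := by positivity
  set c := 1 + σ ^ 2 * σX ^ 2 / σup ^ 2 with hc_def
  have hc : 0 < c := by positivity
  set L := fun (c x : ℝ) => log (1 + c * x) / x
  have hk_L : ∀ β > 0, 2 * σup ^ 2 * (L c β - L 1 β) + σlow ^ 2 * L 1 β = k β := by
    intro β hβ
    have hcβ : 0 < 1 + c * β := by positivity
    have hβ1 : 0 < 1 + β := by positivity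
    have hratio : (β * (σ ^ 2 * σX ^ 2 + σup ^ 2) + σup ^ 2) / (β * σup ^ 2 + σup ^ 2)
        = (1 + c * β) / (1 + β) := by
      rw [hc_def]
      field_simp
      ring
    rw [hk, hratio, log_div hcβ.ne' hβ1.ne']
    simp only [L, one_mul]
    ring
  have hk_ev {l : Filter ℝ} (hl : Ioi 0 ∈ l) :
      ∀ᶠ β in l, 2 * σup ^ 2 * (L c β - L 1 β) + σlow ^ 2 * L 1 β = k β :=
    mem_of_superset hl hk_L
  have hlim0 : Tendsto k (𝓝[>] 0) (𝓝 (2 * σX ^ 2 * σ ^ 2 + σlow ^ 2)) := by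
    have hL (a : ℝ) := (tendsto_log_one_add_mul_div_nhdsNE a).mono_left (nhdsGT_le_nhdsNE 0)
    convert ((tendsto_const_nhds.mul ((hL c).sub (hL 1))).add
      (tendsto_const_nhds.mul (hL 1))).congr' (hk_ev self_mem_nhdsWithin) using 2
    rw [hc_def]
    field_simp
    ring
  refine ⟨hlim0, ?_, fun hlt => ?_⟩
  · have hL {a : ℝ} (ha : 0 < a) := tendsto_log_one_add_mul_div_atTop ha
    simpa using ((tendsto_const_nhds.mul ((hL hc).sub (hL one_pos))).add
      (tendsto_const_nhds.mul (hL one_pos))).congr' (hk_ev (Ioi_mem_atTop 0))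
  · obtain ⟨β, hβk, hβ⟩ :=
      ((hlim0.eventually (eventually_gt_nhds hlt)).and self_mem_nhdsWithin).exists
    exact ⟨β, hβ, hβk, half_sub_half_log_div_sub_div_neg hs hβk⟩

/-- Example 4.2 (Rayleigh fading): with
`k_β = (2σ̄²/β)·ln((β(σ²σ̲_X²+σ̄²)+σ̄²)/(βσ̄²+σ̄²)) + (σ̲²/β)·ln(1+β)`,
one has `k_β → 2σ̲_X²σ² + σ̲²` as `β → 0⁺`, `k_β → 0` as `β → ∞`, and if
`2σ̲_X²σ² + σ̲² > σ̄²` then some `β > 0` satisfies `k_β > σ̄²` and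
`1/2 − (1/2)·ln(σ̄²/k_β) − k_β/(2σ̄²) < 0`. -/
theorem rayleigh_fading_kbeta
    (σlow σup σ σX : ℝ) (hσlow : 0 < σlow) (hσle : σlow ≤ σup)
    (hσ : 0 < σ) (hσX : 0 < σX)
    (k : ℝ → ℝ)
    (hk : ∀ β, k β = (2 * σup ^ 2 / β)
        * Real.log ((β * (σ ^ 2 * σX ^ 2 + σup ^ 2) + σup ^ 2) / (β * σup ^ 2 + σup ^ 2))
      + (σlow ^ 2 / β) * Real.log (1 + β)) :
    Tendsto k (nhdsWithin 0 (Ioi 0)) (nhds (2 * σX ^ 2 * σ ^ 2 + σlow ^ 2)) ∧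
    Tendsto k atTop (nhds 0) ∧
    (σup ^ 2 < 2 * σX ^ 2 * σ ^ 2 + σlow ^ 2 →
      ∃ β : ℝ, 0 < β ∧ σup ^ 2 < k β ∧
        1 / 2 - (1 / 2) * Real.log (σup ^ 2 / k β) - k β / (2 * σup ^ 2) < 0) :=
  rayleigh_fading_kbeta_general σlow σup σ σX hσlow hσle k hk
end

section
/- (Exponential decay of the false-alarm probability.) Let 0 < σ̄, k > σ̄² and d ∈ ℝ. For each n ≥ 1, let (Ωₙ, Fₙ, Pₙ) be a probability space carrying independent real random variables Z₁, …, Zₙ with Zᵢ ~ N(0,σᵢ²) and 0 < σᵢ ≤ σ̄, and set λₙ := k·n + d. Then there exist constants C > 0 and γ > 0 (depending only on k, d, σ̄) such that for all sufficiently large n, Pₙ( Σᵢ₌₁ⁿ Zᵢ² ≥ λₙ ) ≤ C·exp(−γn); in particular Pₙ( Σᵢ₌₁ⁿ Zᵢ² ≥ λₙ ) → 0 as n → ∞. -/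
/-! If `Z ~ N(0, v)` then `E exp(t Z²) = (1 - 2tv)^(-1/2)` for `2tv < 1`, so independence and
Markov's inequality (the Chernoff bound) give
`P(Σ Zᵢ² ≥ kn + d) ≤ e^(-t(kn + d)) ∏ (1 - 2tσᵢ²)^(-1/2)`. Bounding every `σᵢ²` by `V = σ̄²`
and taking the optimal `t = (1/V - 1/k)/2` turns this into `e^(-td) e^(-n I)`, where
`I = chiSqRate V k` is the Cramér rate function of `V χ²₁` at `k`; it is positive because
`log x < x - 1` at `x = k/V > 1`. -/

open MeasureTheory ProbabilityTheory Real Filter Finset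
open scoped NNReal

universe u

lemma gaussianPDFReal_zero_mul_exp_mul_sq (v : ℝ≥0) (t x : ℝ) :
    gaussianPDFReal 0 v x * exp (t * x ^ 2)
      = (√(2 * π * v))⁻¹ * exp (-((2 * (v : ℝ))⁻¹ - t) * x ^ 2) := by
  rw [gaussianPDFReal, mul_assoc, ← exp_add]
  ring_nf

lemma inv_two_mul_sub_pos {v t : ℝ} (hv : 0 < v) (ht : 2 * t * v < 1) : 0 < (2 * v)⁻¹ - t := by
  rw [sub_pos, ← one_div, lt_div_iff₀ (by positivity)]
  linarith

lemma integrable_exp_mul_sq_gaussianReal {v : ℝ≥0} (hv : v ≠ 0) {t : ℝ} (ht : 2 * t * v < 1) :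
    Integrable (fun x ↦ exp (t * x ^ 2)) (gaussianReal 0 v) := by
  have hb := inv_two_mul_sub_pos (NNReal.coe_pos.mpr (pos_iff_ne_zero.mpr hv)) ht
  rw [gaussianReal_of_var_ne_zero _ hv, gaussianPDF_def, integrable_withDensity_iff_integrable_smul'
    (by fun_prop) (ae_of_all _ fun _ ↦ ENNReal.ofReal_lt_top)]
  simp only [ENNReal.toReal_ofReal (gaussianPDFReal_nonneg _ _ _), smul_eq_mul,
    gaussianPDFReal_zero_mul_exp_mul_sq]
  exact (integrable_exp_neg_mul_sq hb).const_mul _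

lemma integral_exp_mul_sq_gaussianReal {v : ℝ≥0} (hv : v ≠ 0) {t : ℝ} (ht : 2 * t * v < 1) :
    ∫ x, exp (t * x ^ 2) ∂gaussianReal 0 v = (√(1 - 2 * t * v))⁻¹ := by
  have hv' : 0 < (v : ℝ) := NNReal.coe_pos.mpr (pos_iff_ne_zero.mpr hv)
  have hb := inv_two_mul_sub_pos hv' ht
  have : π / ((2 * (v : ℝ))⁻¹ - t) = 2 * π * v / (1 - 2 * t * v) := by
    field_simp
  simp only [integral_gaussianReal_eq_integral_smul hv, smul_eq_mul,
    gaussianPDFReal_zero_mul_exp_mul_sq, integral_const_mul, integral_gaussian, this,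
    sqrt_div (by positivity : (0:ℝ) ≤ 2 * π * v)]
  have : √(2 * π * v) ≠ 0 := by positivity
  field_simp

section SquareOfGaussian

variable {Ω : Type*} [MeasurableSpace Ω] {μ : Measure Ω} {v : ℝ≥0} {t : ℝ}

lemma integrable_exp_mul_sq_of_map_eq_gaussianReal {Z : Ω → ℝ} (hZ : AEMeasurable Z μ)
    (hZv : μ.map Z = gaussianReal 0 v) (hv : v ≠ 0) (ht : 2 * t * v < 1) :
    Integrable (fun ω ↦ exp (t * Z ω ^ 2)) μ :=
  (integrable_map_measure (g := fun x ↦ exp (t * x ^ 2)) (by fun_prop) hZ).mp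
    (hZv ▸ integrable_exp_mul_sq_gaussianReal hv ht)

lemma mgf_sq_of_map_eq_gaussianReal {Z : Ω → ℝ} (hZ : AEMeasurable Z μ)
    (hZv : μ.map Z = gaussianReal 0 v) (hv : v ≠ 0) (ht : 2 * t * v < 1) :
    mgf (fun ω ↦ Z ω ^ 2) μ t = (√(1 - 2 * t * v))⁻¹ := by
  rw [← integral_exp_mul_sq_gaussianReal hv ht, ← hZv, mgf, integral_map hZ (by fun_prop)]

end SquareOfGaussian

noncomputable def chiSqRate (V k : ℝ) : ℝ := (k / V - 1 - log (k / V)) / 2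

lemma chiSqRate_pos {V k : ℝ} (hV : 0 < V) (hVk : V < k) : 0 < chiSqRate V k := by
  have := log_lt_sub_one_of_pos (div_pos (hV.trans hVk) hV) ((one_lt_div hV).2 hVk).ne'
  unfold chiSqRate
  linarith

section SumOfSquares

variable {Ω : Type*} [MeasurableSpace Ω] {μ : Measure Ω} {t : ℝ}
variable {ι : Type*} [Fintype ι] {W : ι → Ω → ℝ} {v : ι → ℝ≥0}

theorem measureReal_sum_sq_ge_le_exp_mul_prod (hW : ∀ i, Measurable (W i))
    (hind : iIndepFun W μ)
    (hWv : ∀ i, μ.map (W i) = gaussianReal 0 (v i)) (hv : ∀ i, v i ≠ 0)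
    (ht : 0 ≤ t) (htv : ∀ i, 2 * t * v i < 1) (ε : ℝ) :
    μ.real {ω | ε ≤ ∑ i, W i ω ^ 2} ≤ exp (-t * ε) * ∏ i, (√(1 - 2 * t * v i))⁻¹ := by
  have := hind.isProbabilityMeasure
  have hsq_meas i : Measurable fun ω ↦ W i ω ^ 2 := (hW i).pow_const 2
  have hsq_ind : iIndepFun (fun i ω ↦ W i ω ^ 2) μ :=
    hind.comp _ fun _ ↦ measurable_id.pow_const 2
  have hint i (_ : i ∈ univ) : Integrable (fun ω ↦ exp (t * W i ω ^ 2)) μ :=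
    integrable_exp_mul_sq_of_map_eq_gaussianReal (hW i).aemeasurable (hWv i) (hv i) (htv i)
  calc μ.real {ω | ε ≤ ∑ i, W i ω ^ 2}
      = μ.real {ω | ε ≤ (∑ i, fun ω ↦ W i ω ^ 2) ω} := by simp only [Finset.sum_apply]
    _ ≤ exp (-t * ε) * mgf (∑ i, fun ω ↦ W i ω ^ 2) μ t :=
      measure_ge_le_exp_mul_mgf ε ht (hsq_ind.integrable_exp_mul_sum hsq_meas hint)
    _ = exp (-t * ε) * ∏ i, (√(1 - 2 * t * v i))⁻¹ := by
      rw [hsq_ind.mgf_sum hsq_meas]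
      simp only [mgf_sq_of_map_eq_gaussianReal (hW _).aemeasurable (hWv _) (hv _) (htv _)]

theorem measureReal_sum_sq_ge_le_exp_chiSqRate (hW : ∀ i, Measurable (W i))
    (hind : iIndepFun W μ)
    (hWv : ∀ i, μ.map (W i) = gaussianReal 0 (v i)) (hv : ∀ i, v i ≠ 0) {V k : ℝ}
    (hvV : ∀ i, (v i : ℝ) ≤ V) (hV : 0 < V) (hVk : V < k) (d : ℝ) :
    μ.real {ω | k * Fintype.card ι + d ≤ ∑ i, W i ω ^ 2}
      ≤ exp (-((V⁻¹ - k⁻¹) / 2) * d) * exp (-chiSqRate V k * Fintype.card ι) := by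
  set t := (V⁻¹ - k⁻¹) / 2
  have hk : 0 < k := hV.trans hVk
  have ht : 0 ≤ t := by have := inv_lt_inv₀ hk hV |>.2 hVk; simp only [t]; linarith
  have htV : 1 - 2 * t * V = V / k := by simp only [t]; field_simp; ring
  have hVk' : 0 < V / k := div_pos hV hk
  have htv i : V / k ≤ 1 - 2 * t * v i := by nlinarith [hvV i]
  calc μ.real {ω | k * Fintype.card ι + d ≤ ∑ i, W i ω ^ 2}
      ≤ exp (-t * (k * Fintype.card ι + d)) * ∏ i, (√(1 - 2 * t * v i))⁻¹ :=
        measureReal_sum_sq_ge_le_exp_mul_prod hW hind hWv hv ht (fun i ↦ by linarith [htv i]) _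
    _ ≤ exp (-t * (k * Fintype.card ι + d)) * ∏ _i : ι, (√(V / k))⁻¹ := by
        gcongr with i
        exact htv i
    _ = exp (-t * d) * exp (-chiSqRate V k * Fintype.card ι) := by
        rw [prod_const, card_univ, ← exp_log (by positivity : 0 < (√(V / k))⁻¹), ← exp_nat_mul,
          ← exp_add, ← exp_add, log_inv, log_sqrt hVk'.le, log_div hV.ne' hk.ne',
          chiSqRate, log_div hk.ne' hV.ne']
        congr 1
        simp only [t]
        field_simp
        ring

end SumOfSquares

theorem measure_sum_sq_ge_le_of_stdDev_le {Ω : Type*} [MeasurableSpace Ω] {μ : Measure Ω}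
    {n : ℕ} {W : Fin n → Ω → ℝ} (hW : ∀ i, Measurable (W i)) (hind : iIndepFun W μ) {τ : Fin n → ℝ}
    (hWτ : ∀ i, μ.map (W i) = gaussianReal 0 ⟨τ i ^ 2, sq_nonneg (τ i)⟩) {σup k : ℝ}
    (hτ : ∀ i, 0 < τ i ∧ τ i ≤ σup) (hσup : 0 < σup) (hk : σup ^ 2 < k) (d : ℝ) :
    (μ {ω | k * n + d ≤ ∑ i, W i ω ^ 2}).toReal
      ≤ exp (-(((σup ^ 2)⁻¹ - k⁻¹) / 2) * d) * exp (-chiSqRate (σup ^ 2) k * n) := by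
  simpa [measureReal_def] using measureReal_sum_sq_ge_le_exp_chiSqRate hW hind hWτ
    (fun i ↦ NNReal.coe_ne_zero.mp (pow_pos (hτ i).1 2).ne')
    (fun i ↦ pow_le_pow_left₀ (hτ i).1.le (hτ i).2 2) (by positivity) hk d

theorem false_alarm_exponential_decay_general
    (σup k d : ℝ) (hσup : 0 < σup) (hk : σup ^ 2 < k)
    -- a given family of probability spaces and random variables, one for each `n`
    (Ωf : ℕ → Type u) (ms : ∀ n, MeasurableSpace (Ωf n))
    (P : ∀ n, Measure (Ωf n))
    (Z : ∀ n, Fin n → Ωf n → ℝ) (hZmeas : ∀ n i, Measurable (Z n i))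
    (hindep : ∀ n, iIndepFun (Z n) (P n))
    (σ : ∀ n, Fin n → ℝ) (hσ : ∀ n i, 0 < σ n i ∧ σ n i ≤ σup)
    (hZ : ∀ n i, Measure.map (Z n i) (P n)
      = gaussianReal 0 ⟨(σ n i) ^ 2, sq_nonneg (σ n i)⟩) :
    (∃ C > (0 : ℝ), ∃ γ > (0 : ℝ), ∃ N : ℕ, ∀ n, N ≤ n →
      -- the constants work uniformly over all admissible probability spaces
      ∀ (Ωn : Type u) (_ : MeasurableSpace Ωn) (Q : Measure Ωn),
        IsProbabilityMeasure Q →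
        ∀ (W : Fin n → Ωn → ℝ), (∀ i, Measurable (W i)) →
          iIndepFun W Q →
          ∀ (τ : Fin n → ℝ), (∀ i, 0 < τ i ∧ τ i ≤ σup) →
            (∀ i, Measure.map (W i) Q = gaussianReal 0 ⟨(τ i) ^ 2, sq_nonneg (τ i)⟩) →
            (Q {ω | k * n + d ≤ ∑ i, (W i ω) ^ 2}).toReal ≤ C * Real.exp (-γ * n)) ∧
    Tendsto (fun n => ((P n) {ω | k * n + d ≤ ∑ i, (Z n i ω) ^ 2}).toReal)
      atTop (nhds 0) := by
  have hγ := chiSqRate_pos (by positivity) hk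
  have hdecay : Tendsto (fun n : ℕ ↦ exp (-chiSqRate (σup ^ 2) k * n)) atTop (nhds 0) := by
    simpa only [neg_mul, Function.comp_def] using
      tendsto_exp_neg_atTop_nhds_zero.comp (tendsto_natCast_atTop_atTop.const_mul_atTop hγ)
  refine ⟨⟨_, exp_pos _, _, hγ, 0, fun n _ Ωn _ Q _ W hW hind τ hτ hWτ ↦
    measure_sum_sq_ge_le_of_stdDev_le hW hind hWτ hτ hσup hk d⟩, ?_⟩
  refine squeeze_zero (fun _ ↦ ENNReal.toReal_nonneg)
    (fun n ↦ measure_sum_sq_ge_le_of_stdDev_le (hZmeas n) (hindep n) (hZ n) (hσ n) hσup hk d) ?_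
  simpa using hdecay.const_mul (exp (-(((σup ^ 2)⁻¹ - k⁻¹) / 2) * d))

/-- Exponential decay of the false-alarm probability: for `k > σ̄² > 0`, `d ∈ ℝ`, and
thresholds `λₙ = kn + d`, there are `C > 0`, `γ > 0` (depending only on `k, d, σ̄`) such
that for all sufficiently large `n`, on any probability space carrying independent
`Z₁,…,Zₙ` with `Zᵢ ~ N(0,σᵢ²)`, `0 < σᵢ ≤ σ̄`, one has
`P(Σ Zᵢ² ≥ λₙ) ≤ C·exp(−γn)`; in particular this probability tends to `0`. -/
theorem false_alarm_exponential_decay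
    (σup k d : ℝ) (hσup : 0 < σup) (hk : σup ^ 2 < k)
    -- a given family of probability spaces and random variables, one for each `n`
    (Ωf : ℕ → Type u) (ms : ∀ n, MeasurableSpace (Ωf n))
    (P : ∀ n, Measure (Ωf n)) (hPprob : ∀ n, IsProbabilityMeasure (P n))
    (Z : ∀ n, Fin n → Ωf n → ℝ) (hZmeas : ∀ n i, Measurable (Z n i))
    (hindep : ∀ n, iIndepFun (Z n) (P n))
    (σ : ∀ n, Fin n → ℝ) (hσ : ∀ n i, 0 < σ n i ∧ σ n i ≤ σup)
    (hZ : ∀ n i, Measure.map (Z n i) (P n)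
      = gaussianReal 0 ⟨(σ n i) ^ 2, sq_nonneg (σ n i)⟩) :
    (∃ C > (0 : ℝ), ∃ γ > (0 : ℝ), ∃ N : ℕ, ∀ n, N ≤ n →
      -- the constants work uniformly over all admissible probability spaces
      ∀ (Ωn : Type u) (_ : MeasurableSpace Ωn) (Q : Measure Ωn),
        IsProbabilityMeasure Q →
        ∀ (W : Fin n → Ωn → ℝ), (∀ i, Measurable (W i)) →
          iIndepFun W Q →
          ∀ (τ : Fin n → ℝ), (∀ i, 0 < τ i ∧ τ i ≤ σup) →
            (∀ i, Measure.map (W i) Q = gaussianReal 0 ⟨(τ i) ^ 2, sq_nonneg (τ i)⟩) →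
            (Q {ω | k * n + d ≤ ∑ i, (W i ω) ^ 2}).toReal ≤ C * Real.exp (-γ * n)) ∧
    Tendsto (fun n => ((P n) {ω | k * n + d ≤ ∑ i, (Z n i ω) ^ 2}).toReal)
      atTop (nhds 0) :=
  false_alarm_exponential_decay_general σup k d hσup hk Ωf ms P Z hZmeas hindep σ hσ hZ
end
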